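/- arXiv:2010.09255 — 6 statements merged into one kernel-verified Lean document; each statement's English description precedes it below -/
import Mathlib

section
/- Let d be even, Δ ≥ 1, and let A be the d×d bidiagonal matrix with 1's on the diagonal and Δ on the subdiagonal (A[i][i]=1, A[i+1][i]=Δ, all other entries 0). Then the integer points in the convex hull of the columns of A are exactly the columns themselves. -/
/-- Columns of the `d × d` bidiagonal matrix with `1`s on the diagonal and `Δ`
on the subdiagonal, viewed as vectors in `ℝ^d`. -/
def bidiagCol (d : ℕ) (Δ : ℤ) (j : Fin d) : Fin d → ℝ :=
  fun i => if i = j then 1 else if (i : ℕ) = (j : ℕ) + 1 then (Δ : ℝ) else 0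

lemma coord_eq (d : ℕ) (Δ : ℤ) (W : Fin d → ℝ) (i : Fin d) :
    (∑ j, W j • bidiagCol d Δ j) i
      = W i + ∑ j : Fin d, (if (j : ℕ) + 1 = (i : ℕ) then W j * Δ else 0) := by
  simp only [Finset.sum_apply, Pi.smul_apply, smul_eq_mul, bidiagCol]
  rw [show W i = ∑ j : Fin d, (if j = i then W j else 0) from by simp, ← Finset.sum_add_distrib]
  refine Finset.sum_congr rfl fun j _ => ?_
  by_cases h1 : i = j
  · subst h1
    simp
  · have h1' : j ≠ i := fun h => h1 h.symm
    by_cases h2 : (i : ℕ) = (j : ℕ) + 1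
    · simp [h1, h1', h2, mul_comm]
    · have h2' : ¬((j : ℕ) + 1 = (i : ℕ)) := fun h => h2 h.symm
      simp [h1, h1', h2, h2']

/-- The integer points of the convex hull of the columns of the bidiagonal
matrix are exactly the columns themselves. -/
theorem stmt0 (d : ℕ) (hd : Even d) (Δ : ℤ) (hΔ : 1 ≤ Δ) :
    {v : Fin d → ℝ | v ∈ convexHull ℝ (Set.range (bidiagCol d Δ)) ∧
      ∀ i, ∃ n : ℤ, v i = (n : ℝ)} = Set.range (bidiagCol d Δ) := by
  apply Set.Subset.antisymm
  · rintro v ⟨hv, hint⟩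
    rw [convexHull_range_eq_exists_affineCombination] at hv
    obtain ⟨s, w, hw0, hw1, hx⟩ := hv
    set W : Fin d → ℝ := fun i => if i ∈ s then w i else 0 with hWdef
    have hW0 : ∀ i, 0 ≤ W i := by
      intro i; simp only [hWdef]; split_ifs with h
      · exact hw0 i h
      · exact le_refl 0
    have hW1 : (∑ i, W i) = 1 := by
      simp only [hWdef]
      rw [Finset.sum_ite_mem, Finset.univ_inter, hw1]
    have hveq : v = ∑ j, W j • bidiagCol d Δ j := by
      rw [← hx, Finset.affineCombination_eq_linear_combination _ _ _ hw1]
      simp only [hWdef, ite_smul, zero_smul]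
      rw [Finset.sum_ite_mem, Finset.univ_inter]
    -- each W is an integer
    have hWint : ∀ n : ℕ, ∀ hn : n < d, ∃ m : ℤ, W ⟨n, hn⟩ = (m : ℝ) := by
      intro n
      induction n with
      | zero =>
        intro hn
        obtain ⟨m, hm⟩ := hint ⟨0, hn⟩
        rw [hveq, coord_eq] at hm
        have hz : (∑ j : Fin d, (if (j : ℕ) + 1 = ((⟨0, hn⟩ : Fin d) : ℕ) then W j * Δ else 0)) = 0 := by
          apply Finset.sum_eq_zero; intro j _; simp
        rw [hz, add_zero] at hm
        exact ⟨m, hm⟩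
      | succ n ih =>
        intro hn
        have hn' : n < d := Nat.lt_of_succ_lt hn
        obtain ⟨m, hm⟩ := ih hn'
        obtain ⟨k, hk⟩ := hint ⟨n + 1, hn⟩
        rw [hveq, coord_eq] at hk
        have hsum : (∑ j : Fin d, (if (j : ℕ) + 1 = n + 1 then W j * Δ else 0))
            = W ⟨n, hn'⟩ * Δ := by
          rw [Finset.sum_eq_single (⟨n, hn'⟩ : Fin d)]
          · simp
          · intro j _ hj
            have : (j : ℕ) ≠ n := by
              intro h; apply hj; exact Fin.ext h
            simp [this]
          · simp
        rw [hsum, hm] at hk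
        exact ⟨k - m * Δ, by push_cast; linarith⟩
    have hWint' : ∀ i : Fin d, ∃ m : ℤ, W i = (m : ℝ) := fun i => hWint i.val i.isLt
    -- each W i is 0 or 1
    have hW01 : ∀ i, W i = 0 ∨ W i = 1 := by
      intro i
      obtain ⟨m, hm⟩ := hWint' i
      have h0 : 0 ≤ W i := hW0 i
      have h1 : W i ≤ 1 := by
        rw [← hW1]
        exact Finset.single_le_sum (fun j _ => hW0 j) (Finset.mem_univ i)
      rw [hm] at h0 h1 ⊢
      have : m = 0 ∨ m = 1 := by
        have : (0:ℤ) ≤ m := by exact_mod_cast h0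
        have : m ≤ 1 := by exact_mod_cast h1
        omega
      rcases this with h | h <;> simp [h]
    -- there is exactly one j with W j = 1
    have hne : ∃ j, W j = 1 := by
      by_contra h
      push_neg at h
      have : (∑ i, W i) = 0 := Finset.sum_eq_zero fun i _ => by
        rcases hW01 i with h0 | h1
        · exact h0
        · exact absurd h1 (h i)
      rw [hW1] at this; norm_num at this
    obtain ⟨j, hj⟩ := hne
    refine ⟨j, ?_⟩
    have hrest : ∀ k, k ≠ j → W k = 0 := by
      intro k hk
      have hsplit := Finset.add_sum_erase Finset.univ W (Finset.mem_univ j)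
      rw [hW1, hj] at hsplit
      have hzero : (∑ i ∈ Finset.univ.erase j, W i) = 0 := by linarith
      have := (Finset.sum_eq_zero_iff_of_nonneg (fun i _ => hW0 i)).mp hzero
      exact this k (Finset.mem_erase.mpr ⟨hk, Finset.mem_univ k⟩)
    rw [hveq]
    rw [Finset.sum_eq_single j]
    · rw [hj, one_smul]
    · intro k _ hk; rw [hrest k hk, zero_smul]
    · simp
  · rintro v ⟨j, rfl⟩
    refine ⟨subset_convexHull ℝ _ (Set.mem_range_self j), fun i => ?_⟩
    unfold bidiagCol
    split_ifs
    · exact ⟨1, by norm_num⟩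
    · exact ⟨Δ, rfl⟩
    · exact ⟨0, by norm_num⟩
end

section
/- Let d be even, Δ ≥ 2. There exist right-hand sides b, b' ∈ ℤ^d_{≥0} with ‖b − b'‖₁ = 1 and a nonnegative integer matrix A ∈ ℤ^{d×d}_{≥0} with ‖A‖_∞ = Δ such that the systems Ax = b and Ax' = b' each have a unique nonnegative integer solution, and these solutions satisfy ‖x − x'‖₁ ≥ Δ^{d-1}. -/
/-!
The matrix `A` has `1` on the diagonal and `Δ` on the subdiagonal, so `A x = b` reads
`x₀ = b₀` and `xᵢ + Δ xᵢ₋₁ = bᵢ`; being unitriangular, `A` is invertible and each system has at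
most one solution. For `b = (Δ^i)ᵢ` the nonnegative solution keeps the even powers `Δ^i` and
vanishes at odd indices; lowering `b₀` to `0` flips this pattern, so the two solutions differ by
`Δ^i` in every coordinate, in particular by `Δ^(d-1)` in the last one.
-/

open Matrix

lemma sum_abs_sub_update {ι R : Type*} [Fintype ι] [DecidableEq ι] [AddCommGroup R]
    [LinearOrder R] [IsOrderedAddMonoid R] (f : ι → R) (a : ι) (c : R) :
    ∑ i, |f i - Function.update f a c i| = |f a - c| := by
  rw [Finset.sum_eq_single a (fun i _ hi => by simp [hi]) (by simp)]
  simp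

lemma setOf_nonneg_mulVec_eq_eq_singleton {n R : Type*} [Fintype n]
    [NonUnitalNonAssocSemiring R] [LE R] {A : Matrix n n R} (hA : Function.Injective A.mulVec)
    {x b : n → R} (hx : ∀ i, 0 ≤ x i) (hAx : A *ᵥ x = b) :
    {y : n → R | (∀ i, 0 ≤ y i) ∧ A *ᵥ y = b} = {x} := by
  ext y
  refine ⟨fun hy => hA (hy.2.trans hAx.symm), ?_⟩
  rintro rfl
  exact ⟨hx, hAx⟩

section Bidiagonal

variable {R : Type*}

def bidiagonal [Zero R] [One R] (d : ℕ) (Δ : R) : Matrix (Fin d) (Fin d) R :=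
  Matrix.of fun i j => if i = j then 1 else if (i : ℕ) = j + 1 then Δ else 0

variable {d : ℕ}

lemma bidiagonal_apply_one_zero [Zero R] [One R] (Δ : R) (hd : 2 ≤ d) :
    bidiagonal d Δ ⟨1, hd⟩ ⟨0, by omega⟩ = Δ := by
  simp [bidiagonal]

lemma bidiagonal_nonneg [Zero R] [One R] [Preorder R] [ZeroLEOneClass R] {Δ : R} (hΔ : 0 ≤ Δ)
    (i j : Fin d) : 0 ≤ bidiagonal d Δ i j := by
  simp only [bidiagonal, of_apply]
  split_ifs <;> simp [hΔ, zero_le_one]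

lemma bidiagonal_le [Zero R] [One R] [Preorder R] [ZeroLEOneClass R] {Δ : R} (hΔ : 1 ≤ Δ)
    (i j : Fin d) : bidiagonal d Δ i j ≤ Δ := by
  simp only [bidiagonal, of_apply]
  split_ifs <;> simp [hΔ, zero_le_one.trans hΔ]

lemma bidiagonal_mulVec_apply_zero [NonAssocSemiring R] (Δ : R) (y : Fin d → R) (hd : 0 < d) :
    (bidiagonal d Δ *ᵥ y) ⟨0, hd⟩ = y ⟨0, hd⟩ := by
  rw [mulVec, dotProduct, Finset.sum_eq_single ⟨0, hd⟩]
  · simp [bidiagonal]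
  · intro j _ hj
    simp [bidiagonal, Ne.symm hj]
  · simp

lemma bidiagonal_mulVec_apply_succ [NonAssocSemiring R] (Δ : R) (y : Fin d → R) {k : ℕ}
    (hk : k + 1 < d) :
    (bidiagonal d Δ *ᵥ y) ⟨k + 1, hk⟩ = y ⟨k + 1, hk⟩ + Δ * y ⟨k, by omega⟩ := by
  rw [mulVec, dotProduct, Finset.sum_eq_add ⟨k + 1, hk⟩ ⟨k, by omega⟩ (by simp [Fin.ext_iff])]
  · simp [bidiagonal, Fin.ext_iff]
  · rintro j - ⟨hj₁, hj₂⟩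
    have : k ≠ j := fun h => hj₂ (Fin.ext h.symm)
    simp [bidiagonal, Ne.symm hj₁, this]
  · simp
  · simp

lemma isLowerTriangular_bidiagonal [Zero R] [One R] (Δ : R) :
    (bidiagonal d Δ).IsLowerTriangular := by
  intro i j hij
  have : (i : ℕ) < j := hij
  simp [bidiagonal, Fin.ne_of_lt this, show (i : ℕ) ≠ j + 1 by omega]

lemma det_bidiagonal [CommRing R] (Δ : R) : (bidiagonal d Δ).det = 1 := by
  rw [det_of_isLowerTriangular _ (isLowerTriangular_bidiagonal Δ)]
  simp [bidiagonal]

lemma bidiagonal_mulVec_injective [CommRing R] (Δ : R) :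
    Function.Injective (bidiagonal d Δ).mulVec :=
  mulVec_injective_of_isUnit <| (isUnit_iff_isUnit_det _).2 <| by simp [det_bidiagonal]

end Bidiagonal

section PowerVectors

variable {R : Type*} {d : ℕ}

def powers [Monoid R] (d : ℕ) (Δ : R) : Fin d → R := fun i => Δ ^ (i : ℕ)

def evenPowers [MonoidWithZero R] (d : ℕ) (Δ : R) : Fin d → R :=
  fun i => if Even (i : ℕ) then Δ ^ (i : ℕ) else 0

def oddPowers [MonoidWithZero R] (d : ℕ) (Δ : R) : Fin d → R :=
  fun i => if Even (i : ℕ) then 0 else Δ ^ (i : ℕ)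

lemma bidiagonal_mulVec_evenPowers [Semiring R] (Δ : R) :
    bidiagonal d Δ *ᵥ evenPowers d Δ = powers d Δ := by
  funext ⟨i, hi⟩
  cases i with
  | zero => simp [bidiagonal_mulVec_apply_zero, evenPowers, powers]
  | succ k =>
    rw [bidiagonal_mulVec_apply_succ]
    by_cases hk : Even k <;> simp [evenPowers, powers, hk, Nat.even_add_one, pow_succ']

lemma bidiagonal_mulVec_oddPowers [Semiring R] (Δ : R) (hd : 0 < d) :
    bidiagonal d Δ *ᵥ oddPowers d Δ = Function.update (powers d Δ) ⟨0, hd⟩ 0 := by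
  funext ⟨i, hi⟩
  cases i with
  | zero => simp [bidiagonal_mulVec_apply_zero, oddPowers]
  | succ k =>
    rw [bidiagonal_mulVec_apply_succ, Function.update_of_ne (by simp [Fin.ext_iff])]
    by_cases hk : Even k <;> simp [oddPowers, powers, hk, Nat.even_add_one, pow_succ']

variable [Semiring R] [PartialOrder R] [IsOrderedRing R] {Δ : R}

lemma powers_nonneg (hΔ : 0 ≤ Δ) (i : Fin d) : 0 ≤ powers d Δ i := pow_nonneg hΔ _

lemma evenPowers_nonneg (hΔ : 0 ≤ Δ) (i : Fin d) : 0 ≤ evenPowers d Δ i := by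
  unfold evenPowers
  split_ifs <;> positivity

lemma oddPowers_nonneg (hΔ : 0 ≤ Δ) (i : Fin d) : 0 ≤ oddPowers d Δ i := by
  unfold oddPowers
  split_ifs <;> positivity

end PowerVectors

lemma abs_evenPowers_sub_oddPowers {R : Type*} [Ring R] [LinearOrder R] [IsStrictOrderedRing R]
    {d : ℕ} {Δ : R} (hΔ : 0 ≤ Δ) (i : Fin d) :
    |evenPowers d Δ i - oddPowers d Δ i| = Δ ^ (i : ℕ) := by
  unfold evenPowers oddPowers
  split_ifs <;> simp [abs_of_nonneg (pow_nonneg hΔ _)]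

/-- Sensitivity lower bound: for even `d` and `Δ ≥ 2` there are a nonnegative
matrix `A` with largest entry `Δ` and right-hand sides `b, b'` at `ℓ₁`-distance
`1` whose unique nonnegative integer solutions differ by at least `Δ^{d-1}` in
the `ℓ₁`-norm. -/
theorem stmt3 (d : ℕ) (hd : Even d) (hd0 : 0 < d) (Δ : ℤ) (hΔ : 2 ≤ Δ) :
    ∃ (A : Matrix (Fin d) (Fin d) ℤ) (b b' : Fin d → ℤ),
      (∀ i j, 0 ≤ A i j) ∧ (∀ i j, A i j ≤ Δ) ∧ (∃ i j, A i j = Δ) ∧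
      (∀ i, 0 ≤ b i) ∧ (∀ i, 0 ≤ b' i) ∧ (∑ i, |b i - b' i| = 1) ∧
      ∃ (x x' : Fin d → ℤ),
        {y : Fin d → ℤ | (∀ i, 0 ≤ y i) ∧ A.mulVec y = b} = {x} ∧
        {y : Fin d → ℤ | (∀ i, 0 ≤ y i) ∧ A.mulVec y = b'} = {x'} ∧
        Δ ^ (d - 1) ≤ ∑ i, |x i - x' i| := by
  have hd2 : 2 ≤ d := by obtain ⟨k, rfl⟩ := hd; omega
  have hΔ0 : 0 ≤ Δ := by omega
  have hinj := bidiagonal_mulVec_injective (d := d) Δ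
  let last : Fin d := ⟨d - 1, by omega⟩
  refine ⟨bidiagonal d Δ, powers d Δ, Function.update (powers d Δ) ⟨0, hd0⟩ 0,
    bidiagonal_nonneg hΔ0, bidiagonal_le (by omega), ⟨_, _, bidiagonal_apply_one_zero Δ hd2⟩,
    powers_nonneg hΔ0, ?_, ?_, evenPowers d Δ, oddPowers d Δ,
    setOf_nonneg_mulVec_eq_eq_singleton hinj (evenPowers_nonneg hΔ0)
      (bidiagonal_mulVec_evenPowers Δ),
    setOf_nonneg_mulVec_eq_eq_singleton hinj (oddPowers_nonneg hΔ0)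
      (bidiagonal_mulVec_oddPowers Δ hd0), ?_⟩
  · intro i
    rw [Function.update_apply]
    split_ifs
    exacts [le_rfl, powers_nonneg hΔ0 i]
  · rw [sum_abs_sub_update]
    simp [powers]
  · calc Δ ^ (d - 1) = |evenPowers d Δ last - oddPowers d Δ last| :=
          (abs_evenPowers_sub_oddPowers hΔ0 last).symm
      _ ≤ ∑ i, |evenPowers d Δ i - oddPowers d Δ i| :=
          Finset.single_le_sum (f := fun i => |evenPowers d Δ i - oddPowers d Δ i|)
            (fun i _ => abs_nonneg _) (Finset.mem_univ last)
end

section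
/- Let d be even, Δ ≥ 1, A the d×d bidiagonal matrix with 1's on the diagonal and Δ on the subdiagonal, b = (1, Δ, …, Δ^{d-1}), and b' = b with first entry replaced by 0. The unique solutions x (for b) and x' (for b') over ℤ^d_{≥0} satisfy ‖x − x'‖₁ = Σ_{i=0}^{d-1} Δ^i. -/
/-- The `d × d` bidiagonal matrix with `1`s on the diagonal and `Δ` on the
subdiagonal. -/
def bidiag (d : ℕ) (Δ : ℤ) : Matrix (Fin d) (Fin d) ℤ :=
  fun i j => if i = j then 1 else if (i : ℕ) = (j : ℕ) + 1 then Δ else 0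

lemma bidiag_mulVec (d : ℕ) (Δ : ℤ) (y : Fin d → ℤ) (i : Fin d) :
    (bidiag d Δ).mulVec y i =
      y i + (if h : (i : ℕ) = 0 then 0 else Δ * y ⟨(i : ℕ) - 1, by omega⟩) := by
  unfold Matrix.mulVec dotProduct bidiag
  have key : ∀ j : Fin d,
      (if i = j then (1:ℤ) else if (i:ℕ) = (j:ℕ)+1 then Δ else 0) * y j
      = (if i = j then y j else 0) + (if (i:ℕ) = (j:ℕ)+1 then Δ * y j else 0) := by
    intro j
    by_cases h1 : i = j
    · subst h1
      have : ¬ ((i:ℕ) = (i:ℕ)+1) := by omega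
      simp [this]
    · by_cases h2 : (i:ℕ) = (j:ℕ)+1 <;> simp [h1, h2]
  rw [Finset.sum_congr rfl (fun j _ => key j), Finset.sum_add_distrib,
      Finset.sum_ite_eq]
  simp only [Finset.mem_univ, if_true]
  congr 1
  by_cases h : (i:ℕ) = 0
  · rw [dif_pos h]
    apply Finset.sum_eq_zero
    intro j _
    rw [if_neg]; omega
  · rw [dif_neg h]
    have hiff : ∀ j : Fin d, ((i:ℕ) = (j:ℕ)+1) ↔ j = ⟨(i:ℕ)-1, by omega⟩ := by
      intro j
      constructor
      · intro hj; apply Fin.ext; simp; omega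
      · intro hj; subst hj; simp; omega
    calc ∑ j : Fin d, (if (i:ℕ) = (j:ℕ)+1 then Δ * y j else 0)
        = ∑ j : Fin d, (if j = ⟨(i:ℕ)-1, by omega⟩ then Δ * y j else 0) := by
          apply Finset.sum_congr rfl; intro j _; simp [hiff j]
      _ = Δ * y ⟨(i:ℕ)-1, by omega⟩ := by
          rw [Finset.sum_ite_eq']; simp

/-- The unique nonnegative integer solutions `x` for `b = (1, Δ, …, Δ^{d-1})`
and `x'` for `b'` (obtained from `b` by replacing the first entry by `0`)
satisfy `‖x − x'‖₁ = Σ_{i=0}^{d-1} Δ^i`. -/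
theorem stmt4 (d : ℕ) (hd : Even d) (Δ : ℤ) (hΔ : 1 ≤ Δ)
    (x x' : Fin d → ℤ)
    (hx : {y : Fin d → ℤ | (∀ i, 0 ≤ y i) ∧
        (bidiag d Δ).mulVec y = fun (i : Fin d) => Δ ^ (i : ℕ)} = {x})
    (hx' : {y : Fin d → ℤ | (∀ i, 0 ≤ y i) ∧
        (bidiag d Δ).mulVec y =
          fun (i : Fin d) => if (i : ℕ) = 0 then 0 else Δ ^ (i : ℕ)} = {x'}) :
    ∑ i, |x i - x' i| = ∑ i ∈ Finset.range d, Δ ^ i := by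
  have hΔ0 : (0:ℤ) ≤ Δ := le_trans zero_le_one hΔ
  set X : Fin d → ℤ := fun i => if (i:ℕ) % 2 = 0 then Δ ^ (i:ℕ) else 0 with hX
  set X' : Fin d → ℤ := fun i => if (i:ℕ) % 2 = 0 then 0 else Δ ^ (i:ℕ) with hX'
  have hXx : X = x := by
    have : X ∈ ({x} : Set (Fin d → ℤ)) := by
      rw [← hx]
      refine ⟨fun i => ?_, ?_⟩
      · dsimp [X]; split
        · positivity
        · exact le_rfl
      · funext i
        rw [bidiag_mulVec]
        dsimp [X]
        by_cases h0 : (i:ℕ) = 0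
        · simp [h0]
        · rw [if_neg h0]
          by_cases hp : (i:ℕ) % 2 = 0
          · have : ¬ (((i:ℕ)-1) % 2 = 0) := by omega
            simp [hp, this]
          · have h2 : ((i:ℕ)-1) % 2 = 0 := by omega
            have : Δ * Δ ^ ((i:ℕ)-1) = Δ ^ (i:ℕ) := by
              rw [← pow_succ']; congr 1; omega
            simp [hp, h2, this]
    exact Set.mem_singleton_iff.mp this
  have hXx' : X' = x' := by
    have : X' ∈ ({x'} : Set (Fin d → ℤ)) := by
      rw [← hx']
      refine ⟨fun i => ?_, ?_⟩
      · dsimp [X']; split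
        · exact le_rfl
        · positivity
      · funext i
        rw [bidiag_mulVec]
        dsimp [X']
        by_cases h0 : (i:ℕ) = 0
        · simp [h0]
        · rw [if_neg h0, if_neg h0]
          by_cases hp : (i:ℕ) % 2 = 0
          · have h2 : ¬ (((i:ℕ)-1) % 2 = 0) := by omega
            have : Δ * Δ ^ ((i:ℕ)-1) = Δ ^ (i:ℕ) := by
              rw [← pow_succ']; congr 1; omega
            simp [hp, h2, this]
          · have h2 : ((i:ℕ)-1) % 2 = 0 := by omega
            simp [hp, h2]
    exact Set.mem_singleton_iff.mp this
  rw [← hXx, ← hXx']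
  have habs : ∀ i : Fin d, |X i - X' i| = Δ ^ (i:ℕ) := by
    intro i
    dsimp [X, X']
    by_cases hp : (i:ℕ) % 2 = 0 <;>
      simp [hp, abs_of_nonneg, abs_of_nonpos, pow_nonneg hΔ0]
  rw [Finset.sum_congr rfl (fun i _ => habs i), Fin.sum_univ_eq_sum_range]
end

section
/- In the Petersen graph, every edge lies in exactly two perfect matchings, and any two distinct perfect matchings share exactly one edge. -/
/-!
A perfect matching is determined by its edge set, and a set of edges is the edge set of a perfect
matching iff it covers every vertex exactly once; such a set has `|V| / 2` edges. So the perfect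
matchings of a finite graph are read off from a finite family of edge sets. For the Petersen graph
a computation shows that this family consists of six matchings, each obtained from a pentagon on
`Fin 5` by pairing every side with the opposite diagonal (a pentagon and its pentagram give the same
matching). Both claims are then checked on these six matchings.
-/

/-- The Petersen graph, presented as the Kneser graph `K(5,2)`: vertices are the
2-element subsets of `Fin 5`, adjacent iff disjoint. -/
def Petersen : SimpleGraph {s : Finset (Fin 5) // s.card = 2} where
  Adj a b := Disjoint a.1 b.1
  symm := ⟨fun a b h => h.symm⟩
  loopless := ⟨fun a h => by
    have h := Finset.disjoint_self_iff_empty _ |>.mp h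
    have h2 := a.2
    rw [h] at h2
    simp at h2⟩

open Finset

namespace Finset

variable {V : Type*} [DecidableEq V] [Fintype V]

theorem card_filter_mem_eq_card_filter_mk_mem (E : Finset (Sym2 V)) (v : V) :
    #{e ∈ E | v ∈ e} = #{w | s(v, w) ∈ E} := by
  rw [← card_image_of_injective {w | s(v, w) ∈ E} fun _ _ => Sym2.congr_right.mp]
  congr 1
  ext e
  simp only [mem_filter, mem_image, mem_univ, true_and]
  constructor
  · rintro ⟨he, hv⟩
    exact ⟨Sym2.Mem.other hv, (Sym2.other_spec hv).symm ▸ he, Sym2.other_spec hv⟩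
  · rintro ⟨w, hw, rfl⟩
    exact ⟨hw, Sym2.mem_mk_left v w⟩

theorem two_mul_card_eq_card_of_forall_card_filter_mem_eq_one {E : Finset (Sym2 V)}
    (hE : ∀ e ∈ E, ¬e.IsDiag) (h : ∀ v, #{e ∈ E | v ∈ e} = 1) : 2 * #E = Fintype.card V :=
  calc 2 * #E = ∑ e ∈ E, #e.toFinset := by
        rw [sum_congr rfl fun e he => Sym2.card_toFinset_of_not_isDiag e (hE e he), sum_const,
          smul_eq_mul, mul_comm]
    _ = ∑ v, #{e ∈ E | v ∈ e} := by
        simp only [card_filter]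
        rw [sum_comm]
        refine sum_congr rfl fun e _ => ?_
        rw [← card_filter]
        congr 1
        ext v
        simp
    _ = Fintype.card V := by simp [h]

end Finset

namespace SimpleGraph

variable {V : Type*} {G : SimpleGraph V}

theorem Subgraph.isPerfectMatching_iff_forall_existsUnique_mem_edgeSet {M : G.Subgraph} :
    M.IsPerfectMatching ↔ ∀ v, ∃! w, s(v, w) ∈ M.edgeSet :=
  Subgraph.isPerfectMatching_iff

theorem Subgraph.isPerfectMatching_injOn_edgeSet :
    {M : G.Subgraph | M.IsPerfectMatching}.InjOn Subgraph.edgeSet :=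
  Subgraph.IsMatching.injOn_edgeSet.mono fun _ hM => hM.1

theorem exists_isPerfectMatching_edgeSet_eq_iff {E : Set (Sym2 V)} :
    (∃ M : G.Subgraph, M.IsPerfectMatching ∧ M.edgeSet = E) ↔
      E ⊆ G.edgeSet ∧ ∀ v, ∃! w, s(v, w) ∈ E := by
  constructor
  · rintro ⟨M, hM, rfl⟩
    exact ⟨M.edgeSet_subset, Subgraph.isPerfectMatching_iff_forall_existsUnique_mem_edgeSet.mp hM⟩
  · rintro ⟨hEG, hE⟩
    let M : G.Subgraph :=
      toSubgraph (fromEdgeSet E) ((fromEdgeSet_le G).mpr (Set.sdiff_subset.trans hEG))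
    have hME : M.edgeSet = E := by
      ext e
      induction e using Sym2.ind with
      | _ v w =>
        simp only [M, Subgraph.mem_edgeSet, toSubgraph_adj, fromEdgeSet_adj, and_iff_left_iff_imp]
        exact fun h => G.ne_of_adj (hEG h)
    exact ⟨M, Subgraph.isPerfectMatching_iff_forall_existsUnique_mem_edgeSet.mpr (hME ▸ hE), hME⟩

variable [Fintype V] [DecidableEq V] (G) [DecidableRel G.Adj]

def perfectMatchingEdgeFinsets : Finset (Finset (Sym2 V)) :=
  {E ∈ G.edgeFinset.powersetCard (Fintype.card V / 2) | ∀ v, #{e ∈ E | v ∈ e} = 1}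

variable {G}

theorem mem_perfectMatchingEdgeFinsets {E : Finset (Sym2 V)} :
    E ∈ G.perfectMatchingEdgeFinsets ↔
      ∃ M : G.Subgraph, M.IsPerfectMatching ∧ M.edgeSet = E := by
  have hsub : E ⊆ G.edgeFinset ↔ (E : Set (Sym2 V)) ⊆ G.edgeSet := by
    rw [← coe_subset, coe_edgeFinset]
  simp only [exists_isPerfectMatching_edgeSet_eq_iff, perfectMatchingEdgeFinsets, mem_filter,
    mem_powersetCard, hsub, card_filter_mem_eq_card_filter_mk_mem, mem_coe,
    Fintype.existsUnique_iff_card_one]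
  refine ⟨fun ⟨⟨hEG, _⟩, hE⟩ => ⟨hEG, hE⟩, fun ⟨hEG, hE⟩ => ⟨⟨hEG, ?_⟩, hE⟩⟩
  rw [← two_mul_card_eq_card_of_forall_card_filter_mem_eq_one
    (fun e he => G.not_isDiag_of_mem_edgeSet (hEG he))
    (by simpa [card_filter_mem_eq_card_filter_mk_mem])]
  omega

theorem Subgraph.IsPerfectMatching.exists_mem_perfectMatchingEdgeFinsets {M : G.Subgraph}
    (hM : M.IsPerfectMatching) : ∃ E ∈ G.perfectMatchingEdgeFinsets, M.edgeSet = E :=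
  ⟨M.edgeSet.toFinite.toFinset, mem_perfectMatchingEdgeFinsets.mpr ⟨M, hM, by simp⟩, by simp⟩

theorem ncard_setOf_isPerfectMatching_mem_edgeSet (e : Sym2 V) :
    {M : G.Subgraph | M.IsPerfectMatching ∧ e ∈ M.edgeSet}.ncard =
      #{E ∈ G.perfectMatchingEdgeFinsets | e ∈ E} := by
  rw [← Set.ncard_coe_finset]
  refine Set.ncard_congr (fun M _ => M.edgeSet.toFinite.toFinset) ?_ ?_ ?_
  · rintro M ⟨hM, he⟩
    simpa [mem_perfectMatchingEdgeFinsets] using ⟨⟨M, hM, rfl⟩, he⟩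
  · rintro M M' ⟨hM, -⟩ ⟨hM', -⟩ h
    exact Subgraph.isPerfectMatching_injOn_edgeSet hM hM' (Set.Finite.toFinset_inj.mp h)
  · intro E hE
    obtain ⟨hEG, he⟩ := mem_filter.mp (mem_coe.mp hE)
    obtain ⟨M, hM, hME⟩ := mem_perfectMatchingEdgeFinsets.mp hEG
    exact ⟨M, ⟨hM, hME ▸ he⟩, by simp [hME]⟩

end SimpleGraph

instance : DecidableRel Petersen.Adj := fun a b => inferInstanceAs (Decidable (Disjoint a.1 b.1))

def Petersen.pentagonMatching (p : Fin 5 ↪ Fin 5) :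
    Finset (Sym2 {s : Finset (Fin 5) // s.card = 2}) :=
  univ.image fun i =>
    s(⟨{p i, p (i + 1)}, card_pair (p.injective.ne (by simp))⟩,
      ⟨{p (i + 2), p (i + 4)}, card_pair (p.injective.ne (by simp))⟩)

-- A `List`: `decide` checks `List.Pairwise` far faster than the same claim over a `Finset`.
def Petersen.pentagonMatchings : List (Finset (Sym2 {s : Finset (Fin 5) // s.card = 2})) :=
  [pentagonMatching ⟨![0, 1, 2, 3, 4], by decide⟩, pentagonMatching ⟨![0, 1, 2, 4, 3], by decide⟩,
    pentagonMatching ⟨![0, 1, 3, 2, 4], by decide⟩, pentagonMatching ⟨![0, 1, 3, 4, 2], by decide⟩,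
    pentagonMatching ⟨![0, 1, 4, 2, 3], by decide⟩, pentagonMatching ⟨![0, 1, 4, 3, 2], by decide⟩]

set_option maxRecDepth 100000 in
theorem Petersen.perfectMatchingEdgeFinsets_eq :
    Petersen.perfectMatchingEdgeFinsets = pentagonMatchings.toFinset := by
  decide

theorem Petersen.card_filter_mem_perfectMatchingEdgeFinsets :
    ∀ e ∈ Petersen.edgeFinset, #{E ∈ Petersen.perfectMatchingEdgeFinsets | e ∈ E} = 2 := by
  rw [perfectMatchingEdgeFinsets_eq]
  decide +kernel

theorem Petersen.pairwise_card_inter_pentagonMatchings :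
    pentagonMatchings.Pairwise fun E E' => #(E ∩ E') = 1 := by
  decide +kernel

theorem Petersen.card_inter_of_mem_perfectMatchingEdgeFinsets
    {E E' : Finset (Sym2 {s : Finset (Fin 5) // s.card = 2})}
    (hE : E ∈ Petersen.perfectMatchingEdgeFinsets) (hE' : E' ∈ Petersen.perfectMatchingEdgeFinsets)
    (hne : E ≠ E') : #(E ∩ E') = 1 := by
  rw [perfectMatchingEdgeFinsets_eq, List.mem_toFinset] at hE hE'
  have : Std.Symm fun E E' : Finset (Sym2 {s : Finset (Fin 5) // s.card = 2}) => #(E ∩ E') = 1 :=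
    ⟨fun _ _ h => by rwa [inter_comm]⟩
  exact pairwise_card_inter_pentagonMatchings.forall hE hE' hne

/-- Every edge of the Petersen graph lies in exactly two perfect matchings, and
any two distinct perfect matchings share exactly one edge. -/
theorem stmt5 :
    (∀ e ∈ Petersen.edgeSet,
      {M : Petersen.Subgraph | M.IsPerfectMatching ∧ e ∈ M.edgeSet}.ncard = 2) ∧
    (∀ M M' : Petersen.Subgraph, M.IsPerfectMatching → M'.IsPerfectMatching →
      M ≠ M' → (M.edgeSet ∩ M'.edgeSet).ncard = 1) := by
  refine ⟨fun e he => ?_, fun M M' hM hM' hne => ?_⟩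
  · rw [SimpleGraph.ncard_setOf_isPerfectMatching_mem_edgeSet]
    exact Petersen.card_filter_mem_perfectMatchingEdgeFinsets e (SimpleGraph.mem_edgeFinset.mpr he)
  · obtain ⟨E, hE, hME⟩ := hM.exists_mem_perfectMatchingEdgeFinsets
    obtain ⟨E', hE', hME'⟩ := hM'.exists_mem_perfectMatchingEdgeFinsets
    have hEE' : E ≠ E' := by
      rintro rfl
      exact hne (SimpleGraph.Subgraph.isPerfectMatching_injOn_edgeSet hM hM' (hME ▸ hME'.symm))
    rw [hME, hME', ← coe_inter, Set.ncard_coe_finset]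
    exact Petersen.card_inter_of_mem_perfectMatchingEdgeFinsets hE hE' hEE'
end

section
/- Let M ∈ {0,1}^{15×6} be the edge-matching incidence matrix of the Petersen graph. If y ∈ ℤ^6_{≥0} satisfies My ≤ (1,…,1) componentwise, then at most one coordinate of y is nonzero and each nonzero coordinate equals 1. -/
open scoped Classical

/-- The edge/perfect-matching incidence matrix of the Petersen graph, with rows
indexed by the 15 edges and columns by the 6 perfect matchings, over `ℤ`. -/
noncomputable def incMatZ (eE : Fin 15 ≃ Petersen.edgeSet)
    (eM : Fin 6 ≃ {M : Petersen.Subgraph // M.IsPerfectMatching}) :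
    Matrix (Fin 15) (Fin 6) ℤ :=
  fun i j => if (eE i : Sym2 _) ∈ (eM j).1.edgeSet then 1 else 0

namespace SimpleGraph.Subgraph

variable {V : Type*} {G : SimpleGraph V}

theorem IsPerfectMatching.two_mul_ncard_edgeSet [Fintype V] {M : G.Subgraph}
    (hM : M.IsPerfectMatching) : 2 * M.edgeSet.ncard = Fintype.card V := by
  have hdeg : ∀ v, M.spanningCoe.degree v = 1 := fun v => by
    convert (degree_spanningCoe v).trans (isPerfectMatching_iff_forall_degree.1 hM v)
  have hsum := M.spanningCoe.sum_degrees_eq_twice_card_edges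
  simp only [hdeg, Finset.sum_const, Finset.card_univ, smul_eq_mul, mul_one] at hsum
  rw [hsum, ← edgeSet_spanningCoe, ← coe_edgeFinset, Set.ncard_coe_finset]

end SimpleGraph.Subgraph

namespace Petersen

abbrev Vertex := {s : Finset (Fin 5) // s.card = 2}

instance : DecidableRel Petersen.Adj := fun a b => inferInstanceAs (Decidable (Disjoint a.1 b.1))

def edge (a b c d : Fin 5) (hab : ({a, b} : Finset (Fin 5)).card = 2 := by decide)
    (hcd : ({c, d} : Finset (Fin 5)).card = 2 := by decide) : Sym2 Vertex :=
  s(⟨{a, b}, hab⟩, ⟨{c, d}, hcd⟩)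

def edgeList : List (Sym2 Vertex) :=
  [edge 0 1 2 3, edge 0 1 2 4, edge 0 1 3 4, edge 0 2 1 3, edge 0 2 1 4, edge 0 2 3 4,
   edge 0 3 1 2, edge 0 3 1 4, edge 0 3 2 4, edge 0 4 1 2, edge 0 4 1 3, edge 0 4 2 3,
   edge 1 2 3 4, edge 1 3 2 4, edge 1 4 2 3]

theorem edgeList_nodup : edgeList.Nodup := by decide

theorem mk_mem_edgeList : ∀ a b : Vertex, Petersen.Adj a b → s(a, b) ∈ edgeList := by decide

theorem mem_edgeList_of_mem_edgeSet {e : Sym2 Vertex} (he : e ∈ Petersen.edgeSet) :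
    e ∈ edgeList := by
  induction e with
  | _ a b => exact mk_mem_edgeList a b he

def Covers (l : List (Sym2 Vertex)) : Prop := ∀ v : Vertex, ∃ e ∈ l, v ∈ e

instance : DecidablePred Covers := fun l => inferInstanceAs (Decidable (∀ v, ∃ e ∈ l, v ∈ e))

def coveringSublists : List (List (Sym2 Vertex)) := (edgeList.sublistsLen 5).filter (Covers ·)

theorem coveringSublists_pairwise_meet :
    ∀ s ∈ coveringSublists, ∀ t ∈ coveringSublists, ∃ e ∈ s, e ∈ t := by
  decide +kernel

theorem filter_mem_coveringSublists {M : Petersen.Subgraph} (hM : M.IsPerfectMatching) :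
    edgeList.filter (· ∈ M.edgeSet) ∈ coveringSublists := by
  set l := edgeList.filter (· ∈ M.edgeSet)
  have hcoe : (l.toFinset : Set (Sym2 Vertex)) = M.edgeSet := by
    ext e
    simpa [l] using fun he => mem_edgeList_of_mem_edgeSet (M.edgeSet_subset he)
  have hlen : l.length = 5 := by
    have h10 : 2 * M.edgeSet.ncard = 10 := hM.two_mul_ncard_edgeSet.trans (by decide)
    have hnodup : l.Nodup := edgeList_nodup.filter _
    rw [← hcoe, Set.ncard_coe_finset, List.toFinset_card_of_nodup hnodup] at h10
    omega
  have hcovers : Covers l := fun v => by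
    obtain ⟨w, hw, -⟩ := hM.1 (hM.2 v)
    refine ⟨s(v, w), ?_, Sym2.mem_mk_left _ _⟩
    simpa [l] using ⟨mem_edgeList_of_mem_edgeSet (M.edgeSet_subset hw), hw⟩
  exact List.mem_filter.2 ⟨List.mem_sublistsLen.2 ⟨List.filter_sublist, hlen⟩,
    decide_eq_true hcovers⟩

theorem edgeSet_inter_nonempty {M N : Petersen.Subgraph} (hM : M.IsPerfectMatching)
    (hN : N.IsPerfectMatching) : (M.edgeSet ∩ N.edgeSet).Nonempty := by
  obtain ⟨e, heM, heN⟩ := coveringSublists_pairwise_meet _ (filter_mem_coveringSublists hM) _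
    (filter_mem_coveringSublists hN)
  simp only [List.mem_filter, decide_eq_true_eq] at heM heN
  exact ⟨e, heM.2, heN.2⟩

end Petersen

namespace Matrix

variable {m n : Type*} [Fintype n]

section OrderedSemiring

variable {R : Type*} [Semiring R] [PartialOrder R] [IsOrderedRing R] {A : Matrix m n R}
  {y : n → R}

theorem le_mulVec_apply (hA : ∀ i j, 0 ≤ A i j) (hy : ∀ j, 0 ≤ y j) {i : m} {j : n}
    (hj : A i j = 1) : y j ≤ (A *ᵥ y) i := by
  simpa [mulVec, dotProduct, hj] using Finset.single_le_sum (f := fun l => A i l * y l)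
    (fun l _ => mul_nonneg (hA i l) (hy l)) (Finset.mem_univ j)

theorem add_le_mulVec_apply (hA : ∀ i j, 0 ≤ A i j) (hy : ∀ j, 0 ≤ y j) {i : m} {j k : n}
    (hjk : j ≠ k) (hj : A i j = 1) (hk : A i k = 1) : y j + y k ≤ (A *ᵥ y) i := by
  have := Finset.sum_le_sum_of_subset_of_nonneg (f := fun l => A i l * y l)
    (Finset.subset_univ {j, k}) (fun l _ _ => mul_nonneg (hA i l) (hy l))
  rwa [Finset.sum_pair hjk, hj, hk, one_mul, one_mul] at this

end OrderedSemiring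

theorem support_subsingleton_and_eq_one_of_mulVec_le_one {A : Matrix m n ℤ} {y : n → ℤ}
    (hA : ∀ i j, 0 ≤ A i j) (hmeet : ∀ j k, ∃ i, A i j = 1 ∧ A i k = 1)
    (hy : ∀ j, 0 ≤ y j) (hle : ∀ i, (A *ᵥ y) i ≤ 1) :
    (∀ j k, y j ≠ 0 → y k ≠ 0 → j = k) ∧ (∀ j, y j ≠ 0 → y j = 1) := by
  have hle_one (j : n) : y j ≤ 1 := by
    obtain ⟨i, hij, -⟩ := hmeet j j
    exact (le_mulVec_apply hA hy hij).trans (hle i)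
  refine ⟨fun j k hj hk => ?_, fun j hj => by have := hy j; have := hle_one j; omega⟩
  by_contra hjk
  obtain ⟨i, hij, hik⟩ := hmeet j k
  have hsum := (add_le_mulVec_apply hA hy hjk hij hik).trans (hle i)
  have := hy j
  have := hy k
  omega

end Matrix

/-- If `y ∈ ℤ^6` is nonnegative and `My ≤ (1,…,1)` componentwise, then at most
one coordinate of `y` is nonzero, and each nonzero coordinate equals `1`. -/
theorem stmt10 (eE : Fin 15 ≃ Petersen.edgeSet)
    (eM : Fin 6 ≃ {M : Petersen.Subgraph // M.IsPerfectMatching})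
    (y : Fin 6 → ℤ) (hy : ∀ j, 0 ≤ y j)
    (hle : ∀ i, (incMatZ eE eM).mulVec y i ≤ 1) :
    (∀ j k, y j ≠ 0 → y k ≠ 0 → j = k) ∧ (∀ j, y j ≠ 0 → y j = 1) := by
  refine Matrix.support_subsingleton_and_eq_one_of_mulVec_le_one (fun i j => ?_) (fun j k => ?_)
    hy hle
  · unfold incMatZ
    split_ifs <;> norm_num
  · obtain ⟨e, hej, hek⟩ := Petersen.edgeSet_inter_nonempty (eM j).2 (eM k).2
    exact ⟨eE.symm ⟨e, (eM j).1.edgeSet_subset hej⟩, by simp [incMatZ, hej],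
      by simp [incMatZ, hek]⟩
end

section
/- Let d be odd, Δ ≥ 2, and let A ∈ ℤ^{15d × (6+15d)}_{≥0} be the block matrix whose first 6 columns are (M; 0; …; 0) with M the edge-matching incidence matrix of the Petersen graph, and whose remaining columns form d blocks of 15, where block j (for j = 1,…,d) contributes the identity I₁₅ in block-row j and Δ·I₁₅ in block-row j+1 (no entries below for j = d). Then the integer points in the convex hull of the 6+15d columns of A are exactly the columns themselves. -/
open scoped Classical

/-- The `15d × (6+15d)` block matrix of the Petersen-graph construction: the
first 6 columns are `(M; 0; …; 0)` with `M` the edge/matching incidence matrix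
of the Petersen graph; the remaining `d` blocks of 15 columns contribute `I₁₅`
in block-row `j` and `Δ·I₁₅` in block-row `j+1`. -/
noncomputable def blockMatR (d : ℕ) (Δ : ℤ) (eE : Fin 15 ≃ Petersen.edgeSet)
    (eM : Fin 6 ≃ {M : Petersen.Subgraph // M.IsPerfectMatching}) :
    Matrix (Fin (15 * d)) (Fin (6 + 15 * d)) ℝ :=
  fun r c =>
    if hc : (c : ℕ) < 6 then
      (if hr : (r : ℕ) < 15 then
        (if (eE ⟨(r : ℕ), hr⟩ : Sym2 _) ∈ (eM ⟨(c : ℕ), hc⟩).1.edgeSet then 1 else 0)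
      else 0)
    else if (r : ℕ) + 6 = (c : ℕ) then 1
    else if (r : ℕ) + 6 = (c : ℕ) + 15 then (Δ : ℝ) else 0

/-- The right-hand side whose block-row `j` equals `Δ^(j-1) · (1,…,1) ∈ ℝ^15`. -/
def blockRhs (d : ℕ) (Δ : ℤ) : Fin (15 * d) → ℝ := fun r => (Δ : ℝ) ^ ((r : ℕ) / 15)

/-!
Write a point of the hull as a convex combination of the columns with weights `w`. The first
block-row of the matrix is `0/1`, so an integer point is `0/1` there. If a matching column `a`
has positive weight, each row of an edge of `a` takes the value `1`, so every column in the
support has a `1` in all these rows; a perfect matching containing all edges of another one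
equals it, and an identity column meets only one edge row, so the support is `{a}`. Otherwise
the least column `c₀` of the support is an identity column, and the row holding its `1` meets
no other column of the support (the `Δ` entries of that row lie in an earlier column), so the
value there is `w c₀`, an integer in `(0, 1]`. Either way a single column carries weight `1`.
-/

theorem exists_weights_of_mem_convexHull_range {R ι E : Type*} [Field R] [LinearOrder R]
    [IsStrictOrderedRing R] [Fintype ι] [AddCommGroup E] [Module R E] {x : ι → E} {v : E}
    (hv : v ∈ convexHull R (Set.range x)) :
    ∃ w : ι → R, (∀ i, 0 ≤ w i) ∧ ∑ i, w i = 1 ∧ ∑ i, w i • x i = v := by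
  rw [convexHull_range_eq_exists_affineCombination] at hv
  obtain ⟨s, w, hw₀, hw₁, rfl⟩ := hv
  refine ⟨(s : Set ι).indicator w, fun i => ?_, ?_, ?_⟩
  · by_cases hi : i ∈ s <;> simp [hi, hw₀]
  · rw [Finset.sum_indicator_subset _ s.subset_univ, hw₁]
  · rw [s.affineCombination_eq_linear_combination _ _ hw₁,
      ← Finset.sum_indicator_subset _ s.subset_univ]
    refine Finset.sum_congr rfl fun i _ => ?_
    by_cases hi : i ∈ s <;> simp [hi]

section ConvexWeights

variable {R : Type*} [Field R] [LinearOrder R] {m n : Type*} [Fintype n] {w : n → R}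

theorem weight_eq_one_of_forall_pos_imp_eq (hw0 : ∀ c, 0 ≤ w c) (hw1 : ∑ c, w c = 1) {c₀ : n}
    (h : ∀ c, 0 < w c → c = c₀) : w c₀ = 1 := by
  rw [← hw1, Finset.sum_eq_single c₀ (fun c _ hc => ?_) (by simp)]
  exact ((hw0 c).eq_or_lt.resolve_right fun hpos => hc (h c hpos)).symm

variable [IsStrictOrderedRing R]

theorem eq_one_of_intCast_of_pos_of_le_one {x : R} (hx : ∃ k : ℤ, x = k) (h0 : 0 < x)
    (h1 : x ≤ 1) : x = 1 := by
  obtain ⟨k, rfl⟩ := hx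
  have : k = 1 := by
    have : 0 < k := by exact_mod_cast h0
    have : k ≤ 1 := by exact_mod_cast h1
    omega
  rw [this, Int.cast_one]

theorem weight_eq_zero_of_weight_eq_one (hw0 : ∀ c, 0 ≤ w c) (hw1 : ∑ c, w c = 1) {c₀ c : n}
    (h : w c₀ = 1) (hc : c ≠ c₀) : w c = 0 := by
  classical
  have hrest := Finset.add_sum_erase Finset.univ w (Finset.mem_univ c₀)
  rw [hw1, h, add_eq_left] at hrest
  exact (Finset.sum_eq_zero_iff_of_nonneg fun i _ => hw0 i).1 hrest c (by simp [hc])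

theorem sum_smul_eq_of_weight_eq_one {E : Type*} [AddCommMonoid E] [Module R E]
    (hw0 : ∀ c, 0 ≤ w c) (hw1 : ∑ c, w c = 1) {c₀ : n} (h : w c₀ = 1) (x : n → E) :
    ∑ c, w c • x c = x c₀ := by
  rw [Finset.sum_eq_single c₀ (fun c _ hc => by
    rw [weight_eq_zero_of_weight_eq_one hw0 hw1 h hc, zero_smul]) (by simp), h, one_smul]

variable {A : Matrix m n R}

theorem weight_eq_one_of_isolating_row (hw0 : ∀ c, 0 ≤ w c) (hw1 : ∑ c, w c = 1) {r : m}
    {c₀ : n} (hint : ∃ k : ℤ, ∑ c, w c * A r c = k) (hpos : 0 < w c₀) (hr : A r c₀ = 1)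
    (hiso : ∀ c ≠ c₀, 0 < w c → A r c = 0) : w c₀ = 1 := by
  have hsum : ∑ c, w c * A r c = w c₀ := by
    rw [Finset.sum_eq_single c₀ (fun c _ hc => ?_) (by simp), hr, mul_one]
    rcases (hw0 c).eq_or_lt with h | h
    · rw [← h, zero_mul]
    · rw [hiso c hc h, mul_zero]
  rw [hsum] at hint
  exact eq_one_of_intCast_of_pos_of_le_one hint hpos
    (hw1 ▸ Finset.single_le_sum (fun c _ => hw0 c) (Finset.mem_univ c₀))

theorem eq_one_of_zero_one_row (hw0 : ∀ c, 0 ≤ w c) (hw1 : ∑ c, w c = 1) {r : m} {c₀ c : n}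
    (h01 : ∀ c, A r c = 0 ∨ A r c = 1) (hint : ∃ k : ℤ, ∑ c, w c * A r c = k)
    (hpos : 0 < w c₀) (hr : A r c₀ = 1) (hc : 0 < w c) : A r c = 1 := by
  have hnonneg : ∀ c, 0 ≤ A r c := fun c => by rcases h01 c with h | h <;> simp [h]
  have hle_one : ∀ c, A r c ≤ 1 := fun c => by rcases h01 c with h | h <;> simp [h]
  have hge : w c₀ ≤ ∑ c, w c * A r c := by
    simpa [hr] using Finset.single_le_sum (fun c _ => mul_nonneg (hw0 c) (hnonneg c))
      (Finset.mem_univ c₀)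
  have hle : ∑ c, w c * A r c ≤ 1 :=
    hw1 ▸ Finset.sum_le_sum fun c _ => mul_le_of_le_one_right (hw0 c) (hle_one c)
  have hone := eq_one_of_intCast_of_pos_of_le_one hint (hpos.trans_le hge) hle
  have hdefect : ∑ c, w c * (1 - A r c) = 0 := by
    simp only [mul_sub, mul_one, Finset.sum_sub_distrib, hw1, hone, sub_self]
  have := (Finset.sum_eq_zero_iff_of_nonneg fun c _ =>
    mul_nonneg (hw0 c) (sub_nonneg.2 (hle_one c))).1 hdefect c (Finset.mem_univ c)
  rcases mul_eq_zero.1 this with h | h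
  · exact absurd h hc.ne'
  · linarith

end ConvexWeights

namespace SimpleGraph.Subgraph

variable {V : Type*} {G : SimpleGraph V} {M M' : G.Subgraph}

theorem IsPerfectMatching.eq_of_edgeSet_subset (hM : M.IsPerfectMatching)
    (hM' : M'.IsPerfectMatching) (h : M.edgeSet ⊆ M'.edgeSet) : M = M' := by
  ext x y
  · simp [hM.2 x, hM'.2 x]
  · refine ⟨fun hxy => Subgraph.mem_edgeSet.1 (h (Subgraph.mem_edgeSet.2 hxy)), fun hxy => ?_⟩
    obtain ⟨z, hz, -⟩ := hM.1 (hM.2 x)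
    rwa [hM'.1.eq_of_adj_left hxy (Subgraph.mem_edgeSet.1 (h (Subgraph.mem_edgeSet.2 hz)))]

theorem IsPerfectMatching.exists_edge_ne [Fintype V] (hM : M.IsPerfectMatching)
    (hV : 2 < Fintype.card V) : ∃ e₁ ∈ M.edgeSet, ∃ e₂ ∈ M.edgeSet, e₁ ≠ e₂ := by
  classical
  obtain ⟨x⟩ := Fintype.card_pos_iff.1 (by omega : 0 < Fintype.card V)
  obtain ⟨y, hy, -⟩ := hM.1 (hM.2 x)
  obtain ⟨z, -, hz⟩ := Finset.exists_mem_notMem_of_card_lt_card (s := {x, y})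
    (t := Finset.univ) (Finset.card_le_two.trans_lt hV)
  obtain ⟨u, hu, -⟩ := hM.1 (hM.2 z)
  refine ⟨s(x, y), hy, s(z, u), hu, fun h => hz ?_⟩
  have : z ∈ s(x, y) := h ▸ Sym2.mem_mk_left z u
  simpa [Sym2.mem_iff] using this

end SimpleGraph.Subgraph

theorem two_lt_card_petersen_vertices : 2 < Fintype.card {s : Finset (Fin 5) // s.card = 2} := by
  simp [Fintype.card_finset_len, Nat.choose]

section BlockMatrix

variable {d : ℕ} {Δ : ℤ} {eE : Fin 15 ≃ Petersen.edgeSet}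
  {eM : Fin 6 ≃ {M : Petersen.Subgraph // M.IsPerfectMatching}}

theorem blockMatR_exists_int (r : Fin (15 * d)) (c : Fin (6 + 15 * d)) :
    ∃ k : ℤ, blockMatR d Δ eE eM r c = k := by
  unfold blockMatR
  split_ifs
  exacts [⟨1, by simp⟩, ⟨0, by simp⟩, ⟨0, by simp⟩, ⟨1, by simp⟩, ⟨Δ, rfl⟩, ⟨0, by simp⟩]

theorem blockMatR_of_six_le {r : Fin (15 * d)} {c : Fin (6 + 15 * d)} (hc : 6 ≤ (c : ℕ)) :
    blockMatR d Δ eE eM r c =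
      if (r : ℕ) + 6 = c then 1 else if (r : ℕ) + 6 = (c : ℕ) + 15 then (Δ : ℝ) else 0 :=
  dif_neg hc.not_gt

theorem blockMatR_eq_zero_or_one {r : Fin (15 * d)} (hr : (r : ℕ) < 15) (c : Fin (6 + 15 * d)) :
    blockMatR d Δ eE eM r c = 0 ∨ blockMatR d Δ eE eM r c = 1 := by
  unfold blockMatR
  split_ifs <;> first | exact .inl rfl | exact .inr rfl | omega

theorem add_six_eq_of_blockMatR_eq_one {r : Fin (15 * d)} {c : Fin (6 + 15 * d)}
    (hr : (r : ℕ) < 15) (hc : 6 ≤ (c : ℕ)) (h : blockMatR d Δ eE eM r c = 1) :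
    (r : ℕ) + 6 = c := by
  rw [blockMatR_of_six_le hc] at h
  split_ifs at h <;> first | assumption | omega | norm_num at h

def edgeRow (hd : 0 < d) (eE : Fin 15 ≃ Petersen.edgeSet) (e : Petersen.edgeSet) :
    Fin (15 * d) :=
  Fin.castLE (by omega) (eE.symm e)

theorem edgeRow_lt_fifteen (hd : 0 < d) (e : Petersen.edgeSet) : (edgeRow hd eE e : ℕ) < 15 :=
  (eE.symm e).isLt

theorem edgeRow_injective (hd : 0 < d) : Function.Injective (edgeRow hd eE) :=
  (Fin.castLE_injective _).comp eE.symm.injective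

theorem blockMatR_edgeRow_eq_one_iff (hd : 0 < d) (e : Petersen.edgeSet)
    {c : Fin (6 + 15 * d)} (hc : (c : ℕ) < 6) :
    blockMatR d Δ eE eM (edgeRow hd eE e) c = 1 ↔ (e : Sym2 _) ∈ (eM ⟨c, hc⟩).1.edgeSet := by
  have hrow : (⟨edgeRow hd eE e, edgeRow_lt_fifteen hd e⟩ : Fin 15) = eE.symm e := rfl
  simp only [blockMatR, dif_pos hc, dif_pos (edgeRow_lt_fifteen hd e), hrow,
    Equiv.apply_symm_apply]
  split_ifs <;> simpa

variable {w : Fin (6 + 15 * d) → ℝ}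

theorem blockMatR_weight_eq_one_of_lt_six (hd : 0 < d) (hw0 : ∀ c, 0 ≤ w c)
    (hw1 : ∑ c, w c = 1) (hint : ∀ r, ∃ k : ℤ, ∑ c, w c * blockMatR d Δ eE eM r c = k)
    {a : Fin (6 + 15 * d)} (ha : (a : ℕ) < 6) (hwa : 0 < w a) : w a = 1 := by
  set Ma := eM ⟨a, ha⟩
  have hrow : ∀ e (he : e ∈ Ma.1.edgeSet) c, 0 < w c →
      blockMatR d Δ eE eM (edgeRow hd eE ⟨e, Ma.1.edgeSet_subset he⟩) c = 1 :=
    fun e he c hc => eq_one_of_zero_one_row hw0 hw1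
      (blockMatR_eq_zero_or_one (edgeRow_lt_fifteen hd _)) (hint _) hwa
      ((blockMatR_edgeRow_eq_one_iff hd _ ha).2 he) hc
  refine weight_eq_one_of_forall_pos_imp_eq hw0 hw1 fun c hc => ?_
  by_cases hc6 : (c : ℕ) < 6
  · have hsub : Ma.1.edgeSet ⊆ (eM ⟨c, hc6⟩).1.edgeSet := fun e he =>
      (blockMatR_edgeRow_eq_one_iff hd _ hc6).1 (hrow e he c hc)
    have := eM.injective (Subtype.ext (Ma.2.eq_of_edgeSet_subset (eM _).2 hsub))
    exact Fin.ext (congrArg Fin.val this).symm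
  · obtain ⟨e₁, he₁, e₂, he₂, hne⟩ := Ma.2.exists_edge_ne two_lt_card_petersen_vertices
    have h₁ := add_six_eq_of_blockMatR_eq_one (edgeRow_lt_fifteen hd _) (not_lt.1 hc6)
      (hrow e₁ he₁ c hc)
    have h₂ := add_six_eq_of_blockMatR_eq_one (edgeRow_lt_fifteen hd _) (not_lt.1 hc6)
      (hrow e₂ he₂ c hc)
    have hrows : edgeRow hd eE ⟨e₁, Ma.1.edgeSet_subset he₁⟩ =
        edgeRow hd eE ⟨e₂, Ma.1.edgeSet_subset he₂⟩ := Fin.ext (by omega)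
    exact absurd (congrArg Subtype.val (edgeRow_injective hd hrows)) hne

theorem blockMatR_weight_eq_one_of_six_le (hw0 : ∀ c, 0 ≤ w c) (hw1 : ∑ c, w c = 1)
    (hint : ∀ r, ∃ k : ℤ, ∑ c, w c * blockMatR d Δ eE eM r c = k) {c₀ : Fin (6 + 15 * d)}
    (hc₀ : 6 ≤ (c₀ : ℕ)) (hpos : 0 < w c₀) (hmin : ∀ c, 0 < w c → c₀ ≤ c) : w c₀ = 1 := by
  let r : Fin (15 * d) := ⟨c₀ - 6, by omega⟩
  refine weight_eq_one_of_isolating_row hw0 hw1 (hint r) hpos ?_ fun c hc hwc => ?_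
  · rw [blockMatR_of_six_le hc₀, if_pos (by simp [r]; omega)]
  · have hlt : (c₀ : ℕ) < c := lt_of_le_of_ne (hmin c hwc) (Fin.val_ne_of_ne hc.symm)
    rw [blockMatR_of_six_le (by omega), if_neg (by simp [r]; omega),
      if_neg (by simp [r]; omega)]

theorem blockMatR_exists_weight_eq_one (hd : 0 < d) (hw0 : ∀ c, 0 ≤ w c) (hw1 : ∑ c, w c = 1)
    (hint : ∀ r, ∃ k : ℤ, ∑ c, w c * blockMatR d Δ eE eM r c = k) : ∃ c₀, w c₀ = 1 := by
  have hsupp : (Finset.univ.filter (0 < w ·)).Nonempty := by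
    obtain ⟨c, -, hc⟩ := Finset.exists_ne_zero_of_sum_ne_zero (hw1 ▸ one_ne_zero)
    exact ⟨c, by simpa using (hw0 c).lt_of_ne' hc⟩
  obtain ⟨c₀, hc₀, hmin⟩ := Finset.exists_min_image _ id hsupp
  simp only [Finset.mem_filter, Finset.mem_univ, true_and, id] at hc₀ hmin
  by_cases h6 : (c₀ : ℕ) < 6
  · exact ⟨c₀, blockMatR_weight_eq_one_of_lt_six hd hw0 hw1 hint h6 hc₀⟩
  · exact ⟨c₀, blockMatR_weight_eq_one_of_six_le hw0 hw1 hint (not_lt.1 h6) hc₀ hmin⟩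

end BlockMatrix

theorem stmt11_general (d : ℕ) (hd : Odd d) (Δ : ℤ)
    (eE : Fin 15 ≃ Petersen.edgeSet)
    (eM : Fin 6 ≃ {M : Petersen.Subgraph // M.IsPerfectMatching}) :
    {v : Fin (15 * d) → ℝ |
        v ∈ convexHull ℝ (Set.range fun c r => blockMatR d Δ eE eM r c) ∧
        ∀ r, ∃ n : ℤ, v r = (n : ℝ)} =
      Set.range (fun c r => blockMatR d Δ eE eM r c) := by
  refine Set.Subset.antisymm ?_ ?_
  · rintro v ⟨hv, hint⟩
    obtain ⟨w, hw0, hw1, rfl⟩ := exists_weights_of_mem_convexHull_range hv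
    have hrow : ∀ r, ∃ k : ℤ, ∑ c, w c * blockMatR d Δ eE eM r c = k := by
      simpa [Finset.sum_apply] using hint
    obtain ⟨c₀, hc₀⟩ := blockMatR_exists_weight_eq_one hd.pos hw0 hw1 hrow
    exact ⟨c₀,
      (sum_smul_eq_of_weight_eq_one hw0 hw1 hc₀ fun c r => blockMatR d Δ eE eM r c).symm⟩
  · rintro _ ⟨c, rfl⟩
    exact ⟨subset_convexHull ℝ _ ⟨c, rfl⟩, fun r => blockMatR_exists_int r c⟩

/-- The integer points in the convex hull of the `6 + 15d` columns of the
Petersen-graph block matrix are exactly the columns themselves. -/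
theorem stmt11 (d : ℕ) (hd : Odd d) (Δ : ℤ) (hΔ : 2 ≤ Δ)
    (eE : Fin 15 ≃ Petersen.edgeSet)
    (eM : Fin 6 ≃ {M : Petersen.Subgraph // M.IsPerfectMatching}) :
    {v : Fin (15 * d) → ℝ |
        v ∈ convexHull ℝ (Set.range fun c r => blockMatR d Δ eE eM r c) ∧
        ∀ r, ∃ n : ℤ, v r = (n : ℝ)} =
      Set.range (fun c r => blockMatR d Δ eE eM r c) :=
  stmt11_general d hd Δ eE eM
end
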